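/- arXiv:0912.1122 — 3 statements merged into one kernel-verified Lean document; each statement's English description precedes it below -/
import Mathlib

section
/- Let X be a complex Banach space, T > 0, c ∈ ℝ, and let g : [0,T] → X be continuously differentiable. If θ : [0,T] → X is continuously differentiable and satisfies the Volterra equation of the second kind θ'(t) + ∫_t^T e^{−ic(s−t)} (θ(s) − i c θ'(s)) ds = g(t) for all t ∈ [0,T], then θ' is continuously differentiable on [0,T], θ''(t) − θ(t) = g'(t) − i c g(t) for all t ∈ [0,T] (equivalently θ''(t) − θ(t) = e^{ict} d/dt( e^{−ict} g(t) )), and θ'(T) = g(T). -/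
/-!
Write `κ = i c` and `w = θ - κ θ'`. Since `e^{-κ(s-t)} = e^{κt} e^{-κs}`, the Volterra equation says
`θ'(t) = g(t) - e^{κt} ∫_t^T e^{-κs} w(s) ds`, and the right-hand side is differentiable by the
fundamental theorem of calculus and the product rule. Its derivative is
`g' - κ (g - θ') + w = g' - κ g + θ`; at `t = T` the integral vanishes, so `θ'(T) = g(T)`.
-/

open Set Complex MeasureTheory intervalIntegral

theorem hasDerivWithinAt_integral_Icc_left {E : Type*} [NormedAddCommGroup E]
    [NormedSpace ℝ E] [CompleteSpace E] {f : ℝ → E} {a b t : ℝ}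
    (hf : ContinuousOn f (Icc a b)) (ht : t ∈ Icc a b) :
    HasDerivWithinAt (fun u => ∫ s in u..b, f s) (-f t) (Icc a b) t := by
  have : Fact (t ∈ Icc a b) := ⟨ht⟩
  exact integral_hasDerivWithinAt_left
    (hf.mono (uIcc_subset_Icc ht (right_mem_Icc.2 (ht.1.trans ht.2)))).intervalIntegrable
    (hf.stronglyMeasurableAtFilter_nhdsWithin measurableSet_Icc t) (hf.continuousWithinAt ht)

theorem hasDerivAt_exp_mul_ofReal (κ : ℂ) (t : ℝ) :
    HasDerivAt (fun u : ℝ => exp (κ * u)) (κ * exp (κ * t)) t := by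
  simpa [mul_comm] using ((hasDerivAt_id (t : ℂ)).const_mul κ).cexp.comp_ofReal

section ExponentialKernel

variable {E : Type*} [NormedAddCommGroup E] [NormedSpace ℂ E]

theorem integral_exp_neg_mul_sub_smul (κ : ℂ) (w : ℝ → E) (a b t : ℝ) :
    ∫ s in a..b, exp (-(κ * ((s : ℂ) - (t : ℂ)))) • w s =
      exp (κ * t) • ∫ s in a..b, exp (-(κ * s)) • w s := by
  rw [← intervalIntegral.integral_smul]
  congr 1 with s
  rw [smul_smul, ← exp_add]
  ring_nf

theorem hasDerivWithinAt_integral_exp_neg_mul_sub_smul [CompleteSpace E] (κ : ℂ)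
    {w : ℝ → E} {a b t : ℝ} (hw : ContinuousOn w (Icc a b)) (ht : t ∈ Icc a b) :
    HasDerivWithinAt (fun u : ℝ => ∫ s in u..b, exp (-(κ * ((s : ℂ) - (u : ℂ)))) • w s)
      (κ • (∫ s in t..b, exp (-(κ * ((s : ℂ) - (t : ℂ)))) • w s) - w t) (Icc a b) t := by
  have hkernel : ContinuousOn (fun s : ℝ => exp (-(κ * s)) • w s) (Icc a b) :=
    (by fun_prop : Continuous fun s : ℝ => exp (-(κ * s))).continuousOn.smul hw
  have hprod := (hasDerivAt_exp_mul_ofReal κ t).hasDerivWithinAt.smul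
    (hasDerivWithinAt_integral_Icc_left hkernel ht)
  simp only [integral_exp_neg_mul_sub_smul κ w]
  refine hprod.congr_deriv ?_
  rw [smul_neg, smul_smul, ← exp_add, add_neg_cancel, exp_zero, one_smul, mul_smul]
  abel

end ExponentialKernel

/-- If a continuously differentiable `θ : [0,T] → X` satisfies the Volterra equation of
the second kind `θ'(t) + ∫_t^T e^{-ic(s-t)} (θ(s) - i c θ'(s)) ds = g(t)` with `g`
continuously differentiable, then `θ'` is continuously differentiable,
`θ'' - θ = g' - i c g` on `[0,T]`, and `θ'(T) = g(T)`. -/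
theorem volterra_implies_ode
    {X : Type*} [NormedAddCommGroup X] [NormedSpace ℂ X] [CompleteSpace X]
    (T : ℝ) (hT : 0 < T) (c : ℝ) (g g' θ θ' : ℝ → X)
    (hg : ∀ t ∈ Icc (0 : ℝ) T, HasDerivWithinAt g (g' t) (Icc 0 T) t)
    (hg' : ContinuousOn g' (Icc 0 T))
    (hθ : ∀ t ∈ Icc (0 : ℝ) T, HasDerivWithinAt θ (θ' t) (Icc 0 T) t)
    (hθ' : ContinuousOn θ' (Icc 0 T))
    (hvolt : ∀ t ∈ Icc (0 : ℝ) T,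
      θ' t + ∫ s in t..T,
        Complex.exp (-(Complex.I * (c : ℂ) * ((s : ℂ) - (t : ℂ)))) •
          (θ s - (Complex.I * (c : ℂ)) • θ' s) = g t) :
    (∃ θ'' : ℝ → X,
      (∀ t ∈ Icc (0 : ℝ) T, HasDerivWithinAt θ' (θ'' t) (Icc 0 T) t) ∧
      ContinuousOn θ'' (Icc 0 T) ∧
      (∀ t ∈ Icc (0 : ℝ) T, θ'' t - θ t = g' t - (Complex.I * (c : ℂ)) • g t)) ∧
    θ' T = g T := by
  set κ : ℂ := I * c
  have hθc : ContinuousOn θ (Icc 0 T) := fun t ht => (hθ t ht).continuousWithinAt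
  have hgc : ContinuousOn g (Icc 0 T) := fun t ht => (hg t ht).continuousWithinAt
  set V : ℝ → X := fun t => ∫ s in t..T, exp (-(κ * ((s : ℂ) - (t : ℂ)))) • (θ s - κ • θ' s)
  have hθ'_eq : ∀ t ∈ Icc (0 : ℝ) T, θ' t = g t - V t := fun t ht =>
    eq_sub_of_add_eq (hvolt t ht)
  have hθ'_deriv : ∀ t ∈ Icc (0 : ℝ) T,
      HasDerivWithinAt θ' (g' t - κ • g t + θ t) (Icc 0 T) t := by
    intro t ht
    have hV := hasDerivWithinAt_integral_exp_neg_mul_sub_smul κ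
      (w := fun s => θ s - κ • θ' s) (hθc.sub (hθ'.const_smul κ)) ht
    refine ((hg t ht).sub hV).congr hθ'_eq (hθ'_eq t ht) |>.congr_deriv ?_
    rw [eq_sub_of_add_eq' (hvolt t ht)]
    module
  refine ⟨⟨fun t => g' t - κ • g t + θ t, hθ'_deriv, (hg'.sub (hgc.const_smul κ)).add hθc,
    fun t _ => add_sub_cancel_right _ _⟩, ?_⟩
  simpa using hvolt T (right_mem_Icc.2 hT.le)
end

section
/- Let X be a complex Banach space, T > 0, c ∈ ℝ, and let g : [0,T] → X be continuously differentiable. If θ : [0,T] → X is twice continuously differentiable with θ''(t) − θ(t) = g'(t) − i c g(t) for all t ∈ [0,T] and θ'(T) = g(T), then θ satisfies the Volterra equation of the second kind: θ'(t) + ∫_t^T e^{−ic(s−t)} (θ(s) − i c θ'(s)) ds = g(t) for all t ∈ [0,T]. -/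
open Set Complex MeasureTheory intervalIntegral

/-- Conversely, if `θ : [0,T] → X` is twice continuously differentiable with
`θ'' - θ = g' - i c g` on `[0,T]` and `θ'(T) = g(T)`, then `θ` satisfies the
Volterra equation of the second kind
`θ'(t) + ∫_t^T e^{-ic(s-t)} (θ(s) - i c θ'(s)) ds = g(t)` on `[0,T]`. -/
theorem ode_implies_volterra
    {X : Type*} [NormedAddCommGroup X] [NormedSpace ℂ X] [CompleteSpace X]
    (T : ℝ) (hT : 0 < T) (c : ℝ) (g g' θ θ' θ'' : ℝ → X)
    (hg : ∀ t ∈ Icc (0 : ℝ) T, HasDerivWithinAt g (g' t) (Icc 0 T) t)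
    (hg' : ContinuousOn g' (Icc 0 T))
    (hθ : ∀ t ∈ Icc (0 : ℝ) T, HasDerivWithinAt θ (θ' t) (Icc 0 T) t)
    (hθ' : ∀ t ∈ Icc (0 : ℝ) T, HasDerivWithinAt θ' (θ'' t) (Icc 0 T) t)
    (hθ'' : ContinuousOn θ'' (Icc 0 T))
    (hode : ∀ t ∈ Icc (0 : ℝ) T, θ'' t - θ t = g' t - (Complex.I * (c : ℂ)) • g t)
    (hend : θ' T = g T) :
    ∀ t ∈ Icc (0 : ℝ) T,
      θ' t + ∫ s in t..T,
        Complex.exp (-(Complex.I * (c : ℂ) * ((s : ℂ) - (t : ℂ)))) •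
          (θ s - (Complex.I * (c : ℂ)) • θ' s) = g t := by
  set a : ℂ := -(Complex.I * (c : ℂ)) with ha
  -- the exponential function
  set e : ℝ → ℂ := fun t => Complex.exp (a * (t : ℂ)) with he
  have hederiv : ∀ x : ℝ, HasDerivAt e (a * e x) x := by
    intro x
    have h1 : HasDerivAt (fun t : ℝ => ((t : ℂ))) 1 x := Complex.ofRealCLM.hasDerivAt
    have h2 : HasDerivAt (fun t : ℝ => a * (t : ℂ)) a x := by
      simpa using h1.const_mul a
    simpa [he, mul_comm] using h2.cexp
  have hecont : Continuous e := by
    fun_prop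
  -- continuity of data
  have hθc : ContinuousOn θ (Icc 0 T) := fun x hx => (hθ x hx).continuousWithinAt
  have hθ'c : ContinuousOn θ' (Icc 0 T) := fun x hx => (hθ' x hx).continuousWithinAt
  have hgc : ContinuousOn g (Icc 0 T) := fun x hx => (hg x hx).continuousWithinAt
  -- integrand
  set f : ℝ → X := fun s => e s • (θ s - (Complex.I * (c : ℂ)) • θ' s) with hf
  have hfc : ContinuousOn f (Icc 0 T) := by
    apply (hecont.continuousOn).smul
    exact hθc.sub (continuousOn_const.smul hθ'c)
  -- derivative of the integral part
  have hu : ∀ x ∈ Icc (0 : ℝ) T,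
      HasDerivWithinAt (fun u => ∫ s in u..T, f s) (-f x) (Icc 0 T) x := by
    intro x hx
    haveI : Fact (x ∈ Icc (0 : ℝ) T) := ⟨hx⟩
    have hint : IntervalIntegrable f volume x T :=
      (hfc.mono (uIcc_subset_Icc hx (right_mem_Icc.2 (le_of_lt hT)))).intervalIntegrable
    have hmeas : StronglyMeasurableAtFilter f (nhdsWithin x (Icc (0:ℝ) T)) :=
      hfc.stronglyMeasurableAtFilter_nhdsWithin measurableSet_Icc x
    exact intervalIntegral.integral_hasDerivWithinAt_left hint hmeas (hfc x hx)
  -- the auxiliary function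
  set G : ℝ → X := fun t => e t • (θ' t - g t) + ∫ s in t..T, f s with hG
  have hGderiv : ∀ x ∈ Icc (0 : ℝ) T, HasDerivWithinAt G 0 (Icc 0 T) x := by
    intro x hx
    have h1 : HasDerivWithinAt (fun t => e t • (θ' t - g t))
        (e x • (θ'' x - g' x) + (a * e x) • (θ' x - g x)) (Icc 0 T) x :=
      ((hederiv x).hasDerivWithinAt).smul ((hθ' x hx).sub (hg x hx))
    have h2 := h1.add (hu x hx)
    have key : e x • (θ'' x - g' x) + (a * e x) • (θ' x - g x) + -f x = 0 := by
      have hmode := hode x hx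
      have : θ'' x = θ x + (g' x - (Complex.I * (c : ℂ)) • g x) := by
        rw [← hmode]; abel
      rw [hf]
      simp only [this, ha, mul_smul]
      module
    rw [key] at h2
    exact h2
  have hGconst : ∀ x ∈ Icc (0 : ℝ) T, G x = G 0 :=
    constant_of_has_deriv_right_zero
      (fun x hx => (hGderiv x hx).continuousWithinAt)
      (fun x hx => (hGderiv x (Ico_subset_Icc_self hx)).mono_of_mem_nhdsWithin
        (Icc_mem_nhdsGE_of_mem hx))
  have hGT : G T = 0 := by
    rw [hG]
    simp [intervalIntegral.integral_same, hend]
  intro t ht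
  have hGt : G t = 0 := by
    rw [hGconst t ht, ← hGconst T (right_mem_Icc.2 hT.le), hGT]
  -- rewrite the goal integral
  have hrw : (∫ s in t..T,
        Complex.exp (-(Complex.I * (c : ℂ) * ((s : ℂ) - (t : ℂ)))) •
          (θ s - (Complex.I * (c : ℂ)) • θ' s))
      = Complex.exp (-(a * (t:ℂ))) • ∫ s in t..T, f s := by
    rw [← intervalIntegral.integral_smul]
    apply intervalIntegral.integral_congr
    intro s hs
    rw [hf, he]
    simp only [← smul_assoc, smul_eq_mul, ← Complex.exp_add]
    congr 2
    ring
  rw [hrw]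
  have hGt' : (∫ s in t..T, f s) = -(e t • (θ' t - g t)) := by
    have := hGt
    rw [hG] at this
    linear_combination (norm := module) this
  rw [hGt', smul_neg, ← smul_assoc, smul_eq_mul, ← Complex.exp_add,
    neg_add_cancel, Complex.exp_zero]
  module
end

section
/- Let T > 0 and c ∈ ℝ. Let v : [0,T] → ℂ be continuous, let θ : [0,T] → ℂ be twice continuously differentiable with θ'(T) = 0, and define w(t) = ∫_0^t e^{−ic(t−s)} v(s) ds for t ∈ [0,T]. Then ∫_0^T ( θ(t) w(t) + θ'(t) w'(t) ) dt = ∫_0^T v(s) ( θ'(s) + ∫_s^T ( θ(t) − i c θ'(t) ) e^{−ic(t−s)} dt ) ds. -/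
open Set Complex MeasureTheory intervalIntegral

/-!
Write `a = -ic`. The convolution `w` solves `w' = v + a w`, so the integrand on the left equals
`θ' v + (θ + a θ') w`. Inserting the definition of `w`, the second term becomes an integral over
the triangle `0 ≤ s ≤ t ≤ T`, and Fubini's theorem in the order `s` first, `t` second turns it
into the inner integral on the right.
-/

theorem Set.Icc_inter_Iic_of_le {α : Type*} [LinearOrder α] {a b t : α} (ht : t ≤ b) :
    Icc a b ∩ Iic t = Icc a t := by
  ext; simp only [mem_inter_iff, mem_Icc, mem_Iic]; grind

theorem Set.Icc_inter_Ici_of_le {α : Type*} [LinearOrder α] {a b s : α} (hs : a ≤ s) :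
    Icc a b ∩ Ici s = Icc s b := by
  ext; simp only [mem_inter_iff, mem_Icc, mem_Ici]; grind

theorem intervalIntegral_integral_swap_triangle {E : Type*} [NormedAddCommGroup E]
    [NormedSpace ℝ E] {a b : ℝ} (hab : a ≤ b) {F : ℝ → ℝ → E}
    (hF : IntegrableOn (Function.uncurry F) (Icc a b ×ˢ Icc a b)) :
    ∫ t in a..b, ∫ s in a..t, F t s = ∫ s in a..b, ∫ t in s..b, F t s := by
  set μ := volume.restrict (Icc a b)
  set G : ℝ × ℝ → E := {p : ℝ × ℝ | p.2 ≤ p.1}.indicator (Function.uncurry F)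
  have hG : Integrable G (μ.prod μ) := by
    rw [Measure.prod_restrict]
    exact hF.indicator (measurableSet_le measurable_snd measurable_fst)
  have inner_left : ∀ t ∈ Icc a b, ∫ s in a..t, F t s = ∫ s, G (t, s) ∂μ := by
    intro t ht
    have hGt : (fun s => G (t, s)) = (Iic t).indicator (F t) := by
      ext s; simp [G, indicator_apply]
    rw [hGt, setIntegral_indicator measurableSet_Iic, integral_of_le ht.1,
      ← integral_Icc_eq_integral_Ioc, Icc_inter_Iic_of_le ht.2]
  have inner_right : ∀ s ∈ Icc a b, ∫ t in s..b, F t s = ∫ t, G (t, s) ∂μ := by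
    intro s hs
    have hGs : (fun t => G (t, s)) = (Ici s).indicator (F · s) := by
      ext t; simp [G, indicator_apply]
    rw [hGs, setIntegral_indicator measurableSet_Ici, integral_of_le hs.2,
      ← integral_Icc_eq_integral_Ioc, Icc_inter_Ici_of_le hs.1]
  calc ∫ t in a..b, ∫ s in a..t, F t s = ∫ t, ∫ s, G (t, s) ∂μ ∂μ := by
        rw [integral_of_le hab, ← integral_Icc_eq_integral_Ioc]
        exact setIntegral_congr_fun measurableSet_Icc inner_left
    _ = ∫ s, ∫ t, G (t, s) ∂μ ∂μ := integral_integral_swap hG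
    _ = ∫ s in a..b, ∫ t in s..b, F t s := by
        rw [integral_of_le hab, ← integral_Icc_eq_integral_Ioc]
        exact (setIntegral_congr_fun measurableSet_Icc inner_right).symm

noncomputable def duhamel (a : ℂ) (v : ℝ → ℂ) (t : ℝ) : ℂ :=
  ∫ s in (0 : ℝ)..t, exp (a * (t - s)) * v s

theorem duhamel_eq_exp_mul_integral (a : ℂ) (v : ℝ → ℂ) (t : ℝ) :
    duhamel a v t = exp (a * t) * ∫ s in (0 : ℝ)..t, exp (-a * s) * v s := by
  rw [duhamel, ← intervalIntegral.integral_const_mul]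
  refine integral_congr fun s _ => ?_
  rw [← mul_assoc, ← exp_add]
  ring_nf

theorem hasDerivAt_duhamel (a : ℂ) {v : ℝ → ℂ} (hv : Continuous v) (t : ℝ) :
    HasDerivAt (duhamel a v) (v t + a * duhamel a v t) t := by
  have hexp : ∀ b : ℂ, HasDerivAt (fun x : ℝ => exp (b * x)) (exp (b * t) * b) t := fun b =>
    ((hasDerivAt_id (t : ℂ)).const_mul b).cexp.comp_ofReal.congr_deriv (by simp)
  have hprim : HasDerivAt (fun u => ∫ s in (0 : ℝ)..u, exp (-a * s) * v s)
      (exp (-a * t) * v t) t :=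
    (Continuous.integral_hasStrictDerivAt (by fun_prop) 0 t).hasDerivAt
  rw [funext (duhamel_eq_exp_mul_integral a v)]
  refine ((hexp a).mul hprim).congr_deriv ?_
  rw [← mul_assoc (exp (a * t)), ← exp_add, show a * t + -a * t = 0 by ring, exp_zero]
  ring

theorem duhamel_congr {a : ℂ} {v V : ℝ → ℂ} {T : ℝ} (h : EqOn v V (Icc 0 T)) :
    EqOn (duhamel a v) (duhamel a V) (Icc 0 T) := fun t ht =>
  integral_congr fun s hs => by
    rw [uIcc_of_le ht.1] at hs
    rw [h ⟨hs.1, hs.2.trans ht.2⟩]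

theorem hasDerivWithinAt_duhamel_Icc (a : ℂ) {v : ℝ → ℂ} {T t : ℝ}
    (hv : ContinuousOn v (Icc 0 T)) (ht : t ∈ Icc 0 T) :
    HasDerivWithinAt (duhamel a v) (v t + a * duhamel a v t) (Icc 0 T) t := by
  have hT : 0 ≤ T := ht.1.trans ht.2
  set V := IccExtend hT ((Icc 0 T).domRestrict v)
  have hvV : EqOn v V (Icc 0 T) := fun x hx => by simp [V, IccExtend_of_mem hT _ hx]
  have hV : HasDerivAt (duhamel a V) (V t + a * duhamel a V t) t :=
    hasDerivAt_duhamel a hv.domRestrict.Icc_extend' t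
  rw [hvV ht, duhamel_congr hvV ht]
  exact hV.hasDerivWithinAt.congr (duhamel_congr hvV) (duhamel_congr hvV ht)

theorem integral_mul_duhamel (a : ℂ) {P v : ℝ → ℂ} {T : ℝ} (hT : 0 ≤ T)
    (hP : ContinuousOn P (Icc 0 T)) (hv : ContinuousOn v (Icc 0 T)) :
    ∫ t in (0 : ℝ)..T, P t * duhamel a v t
      = ∫ s in (0 : ℝ)..T, v s * ∫ t in s..T, P t * exp (a * (t - s)) := by
  have hF : ContinuousOn (fun p : ℝ × ℝ => P p.1 * exp (a * (p.1 - p.2)) * v p.2)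
      (Icc 0 T ×ˢ Icc 0 T) :=
    ((hP.comp continuousOn_fst fun _ hp => hp.1).mul (by fun_prop)).mul
      (hv.comp continuousOn_snd fun _ hp => hp.2)
  calc ∫ t in (0 : ℝ)..T, P t * duhamel a v t
      = ∫ t in (0 : ℝ)..T, ∫ s in (0 : ℝ)..t, P t * exp (a * (t - s)) * v s := by
        refine integral_congr fun t _ => ?_
        simp only [duhamel, ← intervalIntegral.integral_const_mul, mul_assoc]
    _ = ∫ s in (0 : ℝ)..T, ∫ t in s..T, P t * exp (a * (t - s)) * v s :=
        intervalIntegral_integral_swap_triangle hT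
          (hF.integrableOn_compact (isCompact_Icc.prod isCompact_Icc))
    _ = ∫ s in (0 : ℝ)..T, v s * ∫ t in s..T, P t * exp (a * (t - s)) := by
        refine integral_congr fun s _ => ?_
        rw [mul_comm (v s), ← intervalIntegral.integral_mul_const]

theorem continuousOn_integral_mul_exp_sub (a : ℂ) {P : ℝ → ℂ} {T : ℝ} (hT : 0 ≤ T)
    (hP : ContinuousOn P (Icc 0 T)) :
    ContinuousOn (fun s : ℝ => ∫ t in s..T, P t * exp (a * (t - s))) (Icc 0 T) := by
  have hsplit : ∀ s : ℝ, ∫ t in s..T, P t * exp (a * (t - s))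
      = exp (-a * s) * ∫ t in s..T, P t * exp (a * t) := fun s => by
    rw [← intervalIntegral.integral_const_mul]
    refine integral_congr fun t _ => ?_
    rw [mul_left_comm, ← exp_add]
    ring_nf
  simp only [hsplit]
  refine (Continuous.continuousOn (by fun_prop)).mul ?_
  have hint : IntegrableOn (fun t => P t * exp (a * t)) (uIcc 0 T) := by
    rw [uIcc_of_le hT]
    exact (hP.mul (by fun_prop)).integrableOn_compact isCompact_Icc
  exact (continuousOn_primitive_interval_left hint).mono Icc_subset_uIcc

theorem integral_mul_duhamel_add_mul_deriv_duhamel (a : ℂ) {θ θ' v : ℝ → ℂ} {T : ℝ}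
    (hT : 0 ≤ T) (hθ : ContinuousOn θ (Icc 0 T)) (hθ' : ContinuousOn θ' (Icc 0 T))
    (hv : ContinuousOn v (Icc 0 T)) :
    ∫ t in (0 : ℝ)..T, (θ t * duhamel a v t + θ' t * (v t + a * duhamel a v t))
      = ∫ s in (0 : ℝ)..T,
          v s * (θ' s + ∫ t in s..T, (θ t + a * θ' t) * exp (a * (t - s))) := by
  have hP : ContinuousOn (fun t => θ t + a * θ' t) (Icc 0 T) := hθ.add (hθ'.const_smul a)
  have hw : ContinuousOn (duhamel a v) (Icc 0 T) := fun t ht =>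
    (hasDerivWithinAt_duhamel_Icc a hv ht).continuousWithinAt
  have hK := continuousOn_integral_mul_exp_sub a hT hP
  have hvθ' : IntervalIntegrable (fun t => v t * θ' t) volume 0 T :=
    (hv.mul hθ').intervalIntegrable_of_Icc hT
  have hPw : IntervalIntegrable (fun t => (θ t + a * θ' t) * duhamel a v t) volume 0 T :=
    (hP.mul hw).intervalIntegrable_of_Icc hT
  have hvK : IntervalIntegrable
      (fun s => v s * ∫ t in s..T, (θ t + a * θ' t) * exp (a * (t - s))) volume 0 T :=
    (hv.mul hK).intervalIntegrable_of_Icc hT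
  calc ∫ t in (0 : ℝ)..T, (θ t * duhamel a v t + θ' t * (v t + a * duhamel a v t))
      = ∫ t in (0 : ℝ)..T, (v t * θ' t + (θ t + a * θ' t) * duhamel a v t) :=
        integral_congr fun t _ => by ring
    _ = (∫ s in (0 : ℝ)..T, v s * θ' s)
          + ∫ s in (0 : ℝ)..T, v s * ∫ t in s..T, (θ t + a * θ' t) * exp (a * (t - s)) := by
        rw [integral_add hvθ' hPw, integral_mul_duhamel a hT hP hv]
    _ = _ := by
        rw [← integral_add hvθ' hvK]
        exact integral_congr fun s _ => by ring

theorem averaging_identity_general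
    (T : ℝ) (hT : 0 < T) (c : ℝ) (v θ θ' θ'' w w' : ℝ → ℂ)
    (hv : ContinuousOn v (Icc 0 T))
    (hθ : ∀ t ∈ Icc (0 : ℝ) T, HasDerivWithinAt θ (θ' t) (Icc 0 T) t)
    (hθ' : ∀ t ∈ Icc (0 : ℝ) T, HasDerivWithinAt θ' (θ'' t) (Icc 0 T) t)
    (hw : ∀ t, w t = ∫ s in (0 : ℝ)..t,
      Complex.exp (-(Complex.I * (c : ℂ) * ((t : ℂ) - (s : ℂ)))) * v s)
    (hw' : ∀ t ∈ Icc (0 : ℝ) T, HasDerivWithinAt w (w' t) (Icc 0 T) t) :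
    (∫ t in (0 : ℝ)..T, (θ t * w t + θ' t * w' t))
      = ∫ s in (0 : ℝ)..T, v s * (θ' s + ∫ t in s..T,
          (θ t - Complex.I * (c : ℂ) * θ' t) *
            Complex.exp (-(Complex.I * (c : ℂ) * ((t : ℂ) - (s : ℂ))))) := by
  have hw_eq : w = duhamel (-(I * c)) v := funext fun t => by simp only [hw, duhamel, neg_mul]
  have hw'_eq : ∀ t ∈ Icc 0 T, w' t = v t + -(I * c) * w t := fun t ht =>
    (uniqueDiffOn_Icc hT t ht).eq_deriv _ (hw' t ht)
      (hw_eq ▸ hasDerivWithinAt_duhamel_Icc _ hv ht)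
  have hθc : ContinuousOn θ (Icc 0 T) := fun t ht => (hθ t ht).continuousWithinAt
  have hθ'c : ContinuousOn θ' (Icc 0 T) := fun t ht => (hθ' t ht).continuousWithinAt
  calc ∫ t in (0 : ℝ)..T, (θ t * w t + θ' t * w' t)
      = ∫ t in (0 : ℝ)..T, (θ t * w t + θ' t * (v t + -(I * c) * w t)) :=
        integral_congr fun t ht => by rw [hw'_eq t (uIcc_of_le hT.le ▸ ht)]
    _ = _ := by
        rw [hw_eq, integral_mul_duhamel_add_mul_deriv_duhamel _ hT.le hθc hθ'c hv]
        simp only [← sub_eq_add_neg, neg_mul]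

/-- Integration-by-parts / Fubini identity: for `θ` twice continuously differentiable on
`[0,T]` with `θ'(T) = 0`, `v` continuous on `[0,T]`, and
`w(t) = ∫_0^t e^{-ic(t-s)} v(s) ds`,
`∫_0^T (θ w + θ' w') dt = ∫_0^T v(s) (θ'(s) + ∫_s^T (θ(t) - i c θ'(t)) e^{-ic(t-s)} dt) ds`. -/
theorem averaging_identity
    (T : ℝ) (hT : 0 < T) (c : ℝ) (v θ θ' θ'' w w' : ℝ → ℂ)
    (hv : ContinuousOn v (Icc 0 T))
    (hθ : ∀ t ∈ Icc (0 : ℝ) T, HasDerivWithinAt θ (θ' t) (Icc 0 T) t)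
    (hθ' : ∀ t ∈ Icc (0 : ℝ) T, HasDerivWithinAt θ' (θ'' t) (Icc 0 T) t)
    (hθ'' : ContinuousOn θ'' (Icc 0 T))
    (hθT : θ' T = 0)
    (hw : ∀ t, w t = ∫ s in (0 : ℝ)..t,
      Complex.exp (-(Complex.I * (c : ℂ) * ((t : ℂ) - (s : ℂ)))) * v s)
    (hw' : ∀ t ∈ Icc (0 : ℝ) T, HasDerivWithinAt w (w' t) (Icc 0 T) t) :
    (∫ t in (0 : ℝ)..T, (θ t * w t + θ' t * w' t))
      = ∫ s in (0 : ℝ)..T, v s * (θ' s + ∫ t in s..T,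
          (θ t - Complex.I * (c : ℂ) * θ' t) *
            Complex.exp (-(Complex.I * (c : ℂ) * ((t : ℂ) - (s : ℂ))))) :=
  averaging_identity_general T hT c v θ θ' θ'' w w' hv hθ hθ' hw hw'
end
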